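/- arXiv:2605.02071 — 9 statements merged into one kernel-verified Lean document; each statement's English description precedes it below -/
import Mathlib

section
/- For every finite group G and every r ≥ 2, P_{r+1}(G) ≤ P_r(G), where P_r(G) = |Hom(ℤ^r, G)| / |G|^r. Moreover, if G is non-abelian, the inequality is strict for all r ≥ 2. -/
/-- The set of `r`-tuples of pairwise commuting elements of `G`. -/
def CommTuple (r : ℕ) (G : Type*) [Group G] : Type _ :=
  {x : Fin r → G // ∀ i j, Commute (x i) (x j)}

/-- `P r G = |Comm_r(G)| / |G|^r`. -/
noncomputable def P (r : ℕ) (G : Type*) [Group G] : ℝ :=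
  (Nat.card (CommTuple r G) : ℝ) / (Nat.card G : ℝ) ^ r

noncomputable instance (r : ℕ) (G : Type*) [Group G] [Fintype G] :
    Fintype (CommTuple r G) := by
  unfold CommTuple
  classical
  infer_instance

/-- The restriction map from `(r+1)`-commuting tuples to `r`-commuting tuples times `G`. -/
def commRes (r : ℕ) (G : Type*) [Group G] (x : CommTuple (r + 1) G) :
    CommTuple r G × G :=
  (⟨Fin.init x.1, fun i j => x.2 i.castSucc j.castSucc⟩, x.1 (Fin.last r))

lemma commRes_inj (r : ℕ) (G : Type*) [Group G] :
    Function.Injective (commRes r G) := by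
  rintro ⟨x, hx⟩ ⟨y, hy⟩ h
  have h1 : Fin.init x = Fin.init y := congrArg (fun p => p.1.1) h
  have h2 : x (Fin.last r) = y (Fin.last r) := congrArg Prod.snd h
  exact Subtype.ext (funext (Fin.lastCases h2 fun i => congrFun h1 i))

lemma aux_div (N' N : ℕ) (c : ℝ) (hc : 0 < c) (r : ℕ) :
    ((N' : ℝ) ≤ N * c → (N' : ℝ) / c ^ (r + 1) ≤ N / c ^ r) ∧
      ((N' : ℝ) < N * c → (N' : ℝ) / c ^ (r + 1) < N / c ^ r) := by
  have hpow : (0 : ℝ) < c ^ r := pow_pos hc r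
  have hpow' : (0 : ℝ) < c ^ (r + 1) := pow_pos hc (r + 1)
  constructor
  · intro h
    rw [div_le_div_iff₀ hpow' hpow]
    calc (N' : ℝ) * c ^ r ≤ (N * c) * c ^ r :=
          mul_le_mul_of_nonneg_right h hpow.le
      _ = N * c ^ (r + 1) := by ring
  · intro h
    rw [div_lt_div_iff₀ hpow' hpow]
    calc (N' : ℝ) * c ^ r < (N * c) * c ^ r :=
          mul_lt_mul_of_pos_right h hpow
      _ = N * c ^ (r + 1) := by ring

theorem stmt0 (G : Type*) [Group G] [Fintype G] (r : ℕ) (hr : 2 ≤ r) :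
    P (r + 1) G ≤ P r G ∧
      ((∃ a b : G, a * b ≠ b * a) → P (r + 1) G < P r G) := by
  classical
  have hc : (0 : ℝ) < (Nat.card G : ℝ) := by
    have : 0 < Nat.card G := Nat.card_pos
    exact_mod_cast this
  have hcard : Nat.card (CommTuple r G × G) = Nat.card (CommTuple r G) * Nat.card G :=
    Nat.card_prod _ _
  have haux := aux_div (Nat.card (CommTuple (r + 1) G))
    (Nat.card (CommTuple r G)) (Nat.card G : ℝ) hc r
  constructor
  · have hle : Nat.card (CommTuple (r + 1) G) ≤ Nat.card (CommTuple r G) * Nat.card G := by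
      rw [← hcard]
      exact Nat.card_le_card_of_injective _ (commRes_inj r G)
    exact haux.1 (by exact_mod_cast hle)
  · rintro ⟨a, b, hab⟩
    have hconst : ∀ i j : Fin r, Commute ((fun _ => a) i) ((fun _ => a) j) :=
      fun _ _ => Commute.refl a
    have hnot : (⟨fun _ => a, hconst⟩, b) ∉ Set.range (commRes r G) := by
      rintro ⟨⟨x, hx⟩, hcomm⟩
      have h1 : Fin.init x = fun _ => a := congrArg (fun p => p.1.1) hcomm
      have h2 : x (Fin.last r) = b := congrArg Prod.snd hcomm
      have h0 : x ((⟨0, by omega⟩ : Fin r).castSucc) = a := congrFun h1 ⟨0, by omega⟩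
      have := hx ((⟨0, by omega⟩ : Fin r).castSucc) (Fin.last r)
      rw [h0, h2] at this
      exact hab this
    have hlt : Nat.card (CommTuple (r + 1) G) < Nat.card (CommTuple r G) * Nat.card G := by
      rw [← hcard, Nat.card_eq_fintype_card, Nat.card_eq_fintype_card]
      exact Fintype.card_lt_of_injective_of_notMem _ (commRes_inj r G) hnot
    exact haux.2 (by exact_mod_cast hlt)
end

section
/- For every finite group G and all integers n, m ≥ 1, P_{n+m}(G) ≤ P_n(G) · P_m(G). Moreover, if G is non-abelian then the inequality is strict. -/
theorem stmt3 (G : Type*) [Group G] [Fintype G] (n m : ℕ) (hn : 1 ≤ n) (hm : 1 ≤ m) :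
    P (n + m) G ≤ P n G * P m G ∧
      ((∃ a b : G, a * b ≠ b * a) → P (n + m) G < P n G * P m G) := by
  classical
  haveI hF : ∀ r : ℕ, Finite (CommTuple r G) := by
    intro r; unfold CommTuple; infer_instance
  haveI : Fintype (CommTuple (n + m) G) := Fintype.ofFinite _
  haveI : Fintype (CommTuple n G) := Fintype.ofFinite _
  haveI : Fintype (CommTuple m G) := Fintype.ofFinite _
  set f : CommTuple (n + m) G → CommTuple n G × CommTuple m G := fun x =>
    (⟨fun i => x.1 (Fin.castAdd m i), fun i j => x.2 _ _⟩,
     ⟨fun i => x.1 (Fin.natAdd n i), fun i j => x.2 _ _⟩) with hf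
  have hinj : Function.Injective f := by
    intro x y h
    have h1 := congrArg (fun p => (Prod.fst p).1) h
    have h2 := congrArg (fun p => (Prod.snd p).1) h
    apply Subtype.ext
    funext i
    refine Fin.addCases (fun i0 => ?_) (fun i0 => ?_) i
    · exact congrFun h1 i0
    · exact congrFun h2 i0
  have hcard : Nat.card (CommTuple (n + m) G) ≤
      Nat.card (CommTuple n G) * Nat.card (CommTuple m G) := by
    have := Fintype.card_le_of_injective f hinj
    simpa [Nat.card_eq_fintype_card, Fintype.card_prod] using this
  have hg : (0:ℝ) < (Nat.card G : ℝ) := by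
    exact_mod_cast Nat.card_pos
  have hgp : (0:ℝ) < (Nat.card G : ℝ) ^ (n + m) := pow_pos hg _
  have hPmul : P n G * P m G =
      ((Nat.card (CommTuple n G) * Nat.card (CommTuple m G) : ℕ) : ℝ) /
        (Nat.card G : ℝ) ^ (n + m) := by
    unfold P
    rw [div_mul_div_comm, pow_add]
    push_cast
    ring
  constructor
  · rw [hPmul]
    unfold P
    exact div_le_div_of_nonneg_right (by exact_mod_cast hcard) hgp.le
  · rintro ⟨a, b, hab⟩
    have hnsurj : ¬ Function.Surjective f := by
      intro hs
      obtain ⟨x, hx⟩ := hs (⟨fun _ => a, fun i j => rfl⟩, ⟨fun _ => b, fun i j => rfl⟩)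
      have ha : x.1 (Fin.castAdd m ⟨0, hn⟩) = a := by
        have := congrArg (fun p => (Prod.fst p).1) hx
        exact congrFun this ⟨0, hn⟩
      have hb : x.1 (Fin.natAdd n ⟨0, hm⟩) = b := by
        have := congrArg (fun p => (Prod.snd p).1) hx
        exact congrFun this ⟨0, hm⟩
      have := x.2 (Fin.castAdd m ⟨0, hn⟩) (Fin.natAdd n ⟨0, hm⟩)
      rw [Commute, SemiconjBy, ha, hb] at this
      exact hab this
    have hlt : Nat.card (CommTuple (n + m) G) <
        Nat.card (CommTuple n G) * Nat.card (CommTuple m G) := by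
      have := Fintype.card_lt_of_injective_not_surjective f hinj hnsurj
      simpa [Nat.card_eq_fintype_card, Fintype.card_prod] using this
    rw [hPmul]
    unfold P
    exact div_lt_div_of_pos_right (by exact_mod_cast hlt) hgp
end

section
/- For every finite group G and every r ≥ 1, the number κ_r(G) of orbits of the diagonal conjugation action of G on the set of commuting r-tuples equals |G|^r · P_{r+1}(G). In particular, |G|^r P_{r+1}(G) is an integer. -/
def commSetoid (r : ℕ) (G : Type*) [Group G] : Setoid (CommTuple r G) where
  r x y := ∃ g : G, ∀ i, g * x.1 i * g⁻¹ = y.1 i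
  iseqv := by
    constructor
    · intro x; exact ⟨1, by simp⟩
    · rintro x y ⟨g, hg⟩
      refine ⟨g⁻¹, fun i => ?_⟩
      rw [← hg i]; group
    · rintro x y z ⟨g, hg⟩ ⟨h, hh⟩
      refine ⟨h * g, fun i => ?_⟩
      rw [← hh i, ← hg i]; group

noncomputable def kappa (r : ℕ) (G : Type*) [Group G] : ℕ :=
  Nat.card (Quotient (commSetoid r G))

section Aux
variable {r : ℕ} {G : Type*} [Group G]

instance : MulAction G (CommTuple r G) where
  smul g x := ⟨fun i => g * x.1 i * g⁻¹, fun i j => by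
    have h := (x.2 i j).map (MulAut.conj g)
    simpa [MulAut.conj_apply, mul_assoc] using h⟩
  one_smul x := Subtype.ext <| funext fun i => by
    show 1 * x.1 i * 1⁻¹ = x.1 i
    group
  mul_smul g h x := Subtype.ext <| funext fun i => by
    show (g * h) * x.1 i * (g * h)⁻¹ = g * (h * x.1 i * h⁻¹) * g⁻¹
    group

lemma smul_commTuple_apply (g : G) (x : CommTuple r G) (i : Fin r) :
    (g • x).1 i = g * x.1 i * g⁻¹ := rfl

lemma commSetoid_eq_orbitRel : commSetoid r G = MulAction.orbitRel G (CommTuple r G) := by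
  ext x y
  constructor
  · rintro ⟨g, hg⟩
    refine ⟨g⁻¹, ?_⟩
    refine Subtype.ext <| funext fun i => ?_
    rw [smul_commTuple_apply, ← hg i]; group
  · rintro ⟨g, hg⟩
    exact ⟨g⁻¹, fun i => by rw [← hg, smul_commTuple_apply]; group⟩

noncomputable def fixedEquiv :
    (Σ g : G, (MulAction.fixedBy (CommTuple r G) g)) ≃ CommTuple (r + 1) G where
  toFun p := ⟨Fin.cons p.1 p.2.1.1, by
    have hfix : ∀ i, p.1 * p.2.1.1 i * p.1⁻¹ = p.2.1.1 i := fun i =>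
      congrFun (congrArg Subtype.val p.2.2) i
    have hcomm : ∀ i, Commute p.1 (p.2.1.1 i) := fun i => by
      have h := hfix i
      rw [mul_inv_eq_iff_eq_mul] at h
      exact h
    intro i j
    refine Fin.cases ?_ (fun i' => ?_) i
    · refine Fin.cases ?_ (fun j' => ?_) j
      · simp
      · simpa using hcomm j'
    · refine Fin.cases ?_ (fun j' => ?_) j
      · simpa using (hcomm i').symm
      · simpa using p.2.1.2 i' j'⟩
  invFun y := ⟨y.1 0, ⟨⟨Fin.tail y.1, fun i j => y.2 i.succ j.succ⟩, by
    refine Subtype.ext <| funext fun i => ?_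
    show y.1 0 * y.1 i.succ * (y.1 0)⁻¹ = y.1 i.succ
    rw [(y.2 0 i.succ).eq]; group⟩⟩
  left_inv p := by
    refine Sigma.ext ?_ ?_
    · rfl
    · refine heq_of_eq (Subtype.ext (Subtype.ext (funext fun i => ?_)))
      rfl
  right_inv y := Subtype.ext (Fin.cons_self_tail y.1)

end Aux

theorem stmt5 (G : Type*) [Group G] [Fintype G] (r : ℕ) (hr : 1 ≤ r) :
    (kappa r G : ℝ) = (Nat.card G : ℝ) ^ r * P (r + 1) G ∧
      ∃ k : ℕ, (Nat.card G : ℝ) ^ r * P (r + 1) G = (k : ℝ) := by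
  classical
  have hFin : ∀ s : ℕ, Finite (CommTuple s G) := fun s => by
    unfold CommTuple; infer_instance
  have key : Nat.card (CommTuple (r + 1) G) = kappa r G * Nat.card G := by
    have := hFin r
    have : Fintype (CommTuple r G) := Fintype.ofFinite _
    have h1 : ∀ g : G, Fintype (MulAction.fixedBy (CommTuple r G) g) := fun g =>
      Fintype.ofFinite _
    have hΩ : Fintype (Quotient (MulAction.orbitRel G (CommTuple r G))) :=
      Fintype.ofFinite _
    have burn := MulAction.sum_card_fixedBy_eq_card_orbits_mul_card_group G (CommTuple r G)
    have hsig : Fintype.card (Σ g : G, (MulAction.fixedBy (CommTuple r G) g)) =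
        ∑ g : G, Fintype.card (MulAction.fixedBy (CommTuple r G) g) :=
      Fintype.card_sigma
    have hc : Nat.card (CommTuple (r + 1) G) =
        Fintype.card (Σ g : G, (MulAction.fixedBy (CommTuple r G) g)) := by
      rw [← Nat.card_eq_fintype_card, Nat.card_congr fixedEquiv.symm]
    rw [hc, hsig, burn]
    have hk : kappa r G = Fintype.card (Quotient (MulAction.orbitRel G (CommTuple r G))) := by
      rw [kappa, commSetoid_eq_orbitRel, Nat.card_eq_fintype_card]
    rw [hk, Nat.card_eq_fintype_card]
  have hGpos : (0 : ℝ) < (Nat.card G : ℝ) := by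
    have : 0 < Nat.card G := Nat.card_pos
    exact_mod_cast this
  have main : (kappa r G : ℝ) = (Nat.card G : ℝ) ^ r * P (r + 1) G := by
    rw [P]
    have : (Nat.card (CommTuple (r + 1) G) : ℝ) = (kappa r G : ℝ) * (Nat.card G : ℝ) := by
      exact_mod_cast congrArg (Nat.cast : ℕ → ℝ) key
    rw [this]
    field_simp
    ring
  exact ⟨main, ⟨kappa r G, main.symm⟩⟩
end

section
/- For every finite group G with |G| > 1 and every r ≥ 1, κ_{r+1}(G) > κ_r(G), where κ_r(G) is the number of diagonal-conjugation orbits of commuting r-tuples in G. -/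
/-- Extend a commuting `r`-tuple by appending `1`. -/
def extTuple {r : ℕ} {G : Type*} [Group G] (x : CommTuple r G) : CommTuple (r + 1) G :=
  ⟨Fin.snoc x.1 1, by
    intro i j
    refine Fin.lastCases ?_ ?_ i <;> [skip; intro i'] <;>
      refine Fin.lastCases ?_ ?_ j <;> try intro j'
    · simp [Fin.snoc_last]
    · simp [Fin.snoc_last, Fin.snoc_castSucc, Commute.one_left]
    · simp [Fin.snoc_last, Fin.snoc_castSucc, Commute.one_right]
    · simpa [Fin.snoc_castSucc] using x.2 i' j'⟩

theorem stmt6 (G : Type*) [Group G] [Fintype G] (hG : 1 < Nat.card G)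
    (r : ℕ) (hr : 1 ≤ r) :
    kappa r G < kappa (r + 1) G := by
  classical
  have : Nontrivial G := by
    rw [Nat.card_eq_fintype_card] at hG
    exact Fintype.one_lt_card_iff_nontrivial.mp hG
  obtain ⟨g0, hg0⟩ := exists_ne (1 : G)
  -- the map on quotients
  let f : Quotient (commSetoid r G) → Quotient (commSetoid (r + 1) G) :=
    Quotient.map extTuple (by
      rintro x y ⟨g, hg⟩
      refine ⟨g, fun i => ?_⟩
      refine Fin.lastCases ?_ ?_ i
      · simp [extTuple, Fin.snoc_last]
      · intro i'
        simpa [extTuple, Fin.snoc_castSucc] using hg i')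
  have hinj : Function.Injective f := by
    intro a b
    induction a using Quotient.inductionOn with | h x =>
    induction b using Quotient.inductionOn with | h y =>
    intro h
    have h' := Quotient.exact h
    obtain ⟨g, hg⟩ := h'
    refine Quotient.sound ⟨g, fun i => ?_⟩
    have := hg i.castSucc
    simpa [extTuple, Fin.snoc_castSucc] using this
  -- the constant tuple g0 is not in the range
  have hc : ∀ i j : Fin (r+1), Commute ((fun _ => g0) i) ((fun _ => g0) j) :=
    fun _ _ => Commute.refl g0
  have hnot : (⟦(⟨fun _ => g0, hc⟩ : CommTuple (r+1) G)⟧ : Quotient (commSetoid (r+1) G))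
      ∉ Set.range f := by
    rintro ⟨a, ha⟩
    induction a using Quotient.inductionOn with | h x =>
    obtain ⟨g, hg⟩ := Quotient.exact ha
    have := hg (Fin.last r)
    simp [extTuple, Fin.snoc_last] at this
    exact hg0 this.symm
  have h1 : Finite (CommTuple r G) := by unfold CommTuple; infer_instance
  have h2 : Finite (CommTuple (r+1) G) := by unfold CommTuple; infer_instance
  have hfin1 : Finite (Quotient (commSetoid r G)) := Quotient.finite _
  have hfin2 : Finite (Quotient (commSetoid (r+1) G)) := Quotient.finite _
  have := Fintype.ofFinite (Quotient (commSetoid r G))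
  have := Fintype.ofFinite (Quotient (commSetoid (r+1) G))
  unfold kappa
  rw [Nat.card_eq_fintype_card, Nat.card_eq_fintype_card]
  exact Fintype.card_lt_of_injective_of_notMem f hinj hnot
end

section
/- Let G be a finite group, m(G) the maximum order of an abelian subgroup of G, and N_max(G) the number of abelian subgroups of order m(G). If G is non-abelian, let b(G) < m(G) be the second-largest order of an abelian subgroup. Then there exists a constant C such that for all r ≥ 1, | |Comm_r(G)| − N_max(G)·m(G)^r | ≤ C·b(G)^r. -/
/-- A subgroup is abelian if all its elements commute. -/
def IsAbelianSubgroup {G : Type*} [Group G] (A : Subgroup G) : Prop :=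
  ∀ x y : A, x * y = y * x

/-- `mG G`: maximum order of an abelian subgroup of `G`. -/
noncomputable def mG (G : Type*) [Group G] : ℕ :=
  sSup {n : ℕ | ∃ A : Subgroup G, IsAbelianSubgroup A ∧ Nat.card A = n}

/-- `Nmax G`: number of abelian subgroups of maximum order. -/
noncomputable def Nmax (G : Type*) [Group G] : ℕ :=
  Nat.card {A : Subgroup G // IsAbelianSubgroup A ∧ Nat.card A = mG G}

/-- `bG G`: second-largest order of an abelian subgroup. -/
noncomputable def bG (G : Type*) [Group G] : ℕ :=
  sSup {n : ℕ | ∃ A : Subgroup G, IsAbelianSubgroup A ∧ Nat.card A = n ∧ n < mG G}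

/-!
Every commuting `r`-tuple lies in some abelian subgroup `A`, and the tuples with entries in `A`
number `|A| ^ r`; so `Comm_r(G)` is the union over the abelian subgroups `A` of these sets of
tuples. The union bound gives `|Comm_r(G)| ≤ N_max m^r + K b^r`, where `K` is the number of abelian
subgroups. Conversely, two distinct abelian subgroups of order `m` meet in an abelian subgroup of
order `< m`, hence `≤ b`, so the second Bonferroni inequality applied to the union over the
maximum-order ones gives `N_max m^r ≤ |Comm_r(G)| + N_max² b^r`.
-/

theorem Finset.sum_card_le_card_biUnion_add_sum_card_inter {ι α : Type*} [DecidableEq ι]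
    [DecidableEq α] (s : Finset ι) (f : ι → Finset α) :
    ∑ i ∈ s, (f i).card ≤
      (s.biUnion f).card + ∑ i ∈ s, ∑ j ∈ s.erase i, (f i ∩ f j).card := by
  induction s using Finset.induction_on with
  | empty => simp
  | @insert a s ha ih =>
    rw [Finset.sum_insert ha, Finset.biUnion_insert]
    have h_union := Finset.card_union_add_card_inter (f a) (s.biUnion f)
    have h_inter : (f a ∩ s.biUnion f).card ≤ ∑ j ∈ s, (f a ∩ f j).card := by
      rw [Finset.inter_biUnion]
      exact Finset.card_biUnion_le
    have h_split : ∑ i ∈ insert a s, ∑ j ∈ (insert a s).erase i, (f i ∩ f j).card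
        = ∑ j ∈ s, (f a ∩ f j).card
          + ∑ i ∈ s, ((f i ∩ f a).card + ∑ j ∈ s.erase i, (f i ∩ f j).card) := by
      rw [Finset.sum_insert ha, Finset.erase_insert ha]
      congr 1
      refine Finset.sum_congr rfl fun i hi => ?_
      have hia : i ≠ a := fun h => ha (h ▸ hi)
      rw [Finset.erase_insert_of_ne hia.symm, Finset.sum_insert (by simp [ha])]
    rw [h_split, Finset.sum_add_distrib]
    omega

theorem Subgroup.card_inf_lt_of_ne {G : Type*} [Group G] {A B : Subgroup G} [Finite A] [Finite B]
    (hAB : A ≠ B) (hcard : Nat.card B = Nat.card A) : Nat.card (A ⊓ B : Subgroup G) < Nat.card A :=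
  (Subgroup.card_le_of_le inf_le_left).lt_of_ne fun h =>
    hAB ((Subgroup.eq_of_le_of_card_ge inf_le_left h.ge).symm.trans
      (Subgroup.eq_of_le_of_card_ge inf_le_right (hcard ▸ h.ge)))

section

variable {G : Type*} [Group G]

theorem IsAbelianSubgroup.commute {A : Subgroup G} (hA : IsAbelianSubgroup A) {x y : G}
    (hx : x ∈ A) (hy : y ∈ A) : Commute x y :=
  congrArg Subtype.val (hA ⟨x, hx⟩ ⟨y, hy⟩)

theorem IsAbelianSubgroup.inf_left {A : Subgroup G} (hA : IsAbelianSubgroup A) (B : Subgroup G) :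
    IsAbelianSubgroup (A ⊓ B) :=
  fun x y => Subtype.ext (hA.commute x.2.1 y.2.1)

theorem isAbelianSubgroup_closure_range {r : ℕ} {x : Fin r → G}
    (hx : ∀ i j, Commute (x i) (x j)) : IsAbelianSubgroup (Subgroup.closure (Set.range x)) := by
  have hcomm : ∀ p ∈ Set.range x, ∀ q ∈ Set.range x, p * q = q * p := by
    rintro _ ⟨i, rfl⟩ _ ⟨j, rfl⟩
    exact hx i j
  exact (Subgroup.isMulCommutative_closure hcomm).is_comm.comm

variable [Finite G]

theorem IsAbelianSubgroup.card_le_mG {A : Subgroup G} (hA : IsAbelianSubgroup A) :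
    Nat.card A ≤ mG G :=
  le_csSup ⟨Nat.card G, by rintro _ ⟨B, -, rfl⟩; exact Subgroup.card_le_card_group B⟩ ⟨A, hA, rfl⟩

theorem IsAbelianSubgroup.card_le_bG {A : Subgroup G} (hA : IsAbelianSubgroup A)
    (hlt : Nat.card A < mG G) : Nat.card A ≤ bG G :=
  le_csSup ⟨Nat.card G, by rintro _ ⟨B, -, rfl, -⟩; exact Subgroup.card_le_card_group B⟩
    ⟨A, hA, rfl, hlt⟩

variable (G) in
noncomputable def abelianSubgroups : Finset (Subgroup G) :=
  (Set.toFinite {A : Subgroup G | IsAbelianSubgroup A}).toFinset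

variable (G) in
noncomputable def maxAbelianSubgroups : Finset (Subgroup G) :=
  (Set.toFinite {A : Subgroup G | IsAbelianSubgroup A ∧ Nat.card A = mG G}).toFinset

theorem mem_abelianSubgroups {A : Subgroup G} :
    A ∈ abelianSubgroups G ↔ IsAbelianSubgroup A :=
  Set.Finite.mem_toFinset _

theorem mem_maxAbelianSubgroups {A : Subgroup G} :
    A ∈ maxAbelianSubgroups G ↔ IsAbelianSubgroup A ∧ Nat.card A = mG G :=
  Set.Finite.mem_toFinset _

theorem card_maxAbelianSubgroups : (maxAbelianSubgroups G).card = Nmax G :=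
  (Nat.card_eq_card_finite_toFinset _).symm

theorem maxAbelianSubgroups_subset : maxAbelianSubgroups G ⊆ abelianSubgroups G :=
  fun _ hA => mem_abelianSubgroups.2 (mem_maxAbelianSubgroups.1 hA).1

end

section

variable {G : Type*} [Group G] [Fintype G]

open scoped Classical in
noncomputable def tuplesIn (r : ℕ) (A : Subgroup G) : Finset (Fin r → G) :=
  Fintype.piFinset fun _ => (A : Set G).toFinset

theorem mem_tuplesIn {r : ℕ} {A : Subgroup G} {x : Fin r → G} :
    x ∈ tuplesIn r A ↔ ∀ i, x i ∈ A := by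
  simp [tuplesIn]

theorem card_tuplesIn (r : ℕ) (A : Subgroup G) : (tuplesIn r A).card = Nat.card A ^ r := by
  classical
  simp [tuplesIn, Nat.card_eq_fintype_card]

theorem tuplesIn_inf [DecidableEq G] (r : ℕ) (A B : Subgroup G) :
    tuplesIn r (A ⊓ B) = tuplesIn r A ∩ tuplesIn r B := by
  ext x
  simp only [Finset.mem_inter, mem_tuplesIn, Subgroup.mem_inf, forall_and]

theorem card_commTuple_eq_card_biUnion [DecidableEq G] (r : ℕ) :
    Nat.card (CommTuple r G) = ((abelianSubgroups G).biUnion (tuplesIn r)).card := by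
  rw [← Nat.card_eq_finsetCard]
  refine Nat.card_congr (Equiv.subtypeEquivRight fun x => ?_)
  simp only [Finset.mem_biUnion, mem_abelianSubgroups, mem_tuplesIn]
  constructor
  · exact fun hx => ⟨_, isAbelianSubgroup_closure_range hx,
      fun i => Subgroup.subset_closure ⟨i, rfl⟩⟩
  · rintro ⟨A, hA, hxA⟩ i j
    exact hA.commute (hxA i) (hxA j)

theorem card_tuplesIn_of_mem_maxAbelianSubgroups (r : ℕ) {A : Subgroup G}
    (hA : A ∈ maxAbelianSubgroups G) : (tuplesIn r A).card = mG G ^ r := by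
  rw [card_tuplesIn, (mem_maxAbelianSubgroups.1 hA).2]

theorem card_tuplesIn_le_of_card_ne_mG (r : ℕ) {A : Subgroup G} (hA : IsAbelianSubgroup A)
    (hne : Nat.card A ≠ mG G) : (tuplesIn r A).card ≤ bG G ^ r := by
  rw [card_tuplesIn]
  exact Nat.pow_le_pow_left (hA.card_le_bG (hA.card_le_mG.lt_of_ne hne)) r

theorem sum_card_tuplesIn_maxAbelianSubgroups (r : ℕ) :
    ∑ A ∈ maxAbelianSubgroups G, (tuplesIn r A).card = Nmax G * mG G ^ r := by
  rw [Finset.sum_const_nat fun A hA => card_tuplesIn_of_mem_maxAbelianSubgroups r hA,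
    card_maxAbelianSubgroups]

theorem card_commTuple_le (r : ℕ) :
    Nat.card (CommTuple r G) ≤ Nmax G * mG G ^ r + (abelianSubgroups G).card * bG G ^ r := by
  classical
  have h_rest : ∑ A ∈ abelianSubgroups G \ maxAbelianSubgroups G, (tuplesIn r A).card
      ≤ (abelianSubgroups G).card * bG G ^ r := by
    refine (Finset.sum_le_card_nsmul _ _ _ fun A hA => ?_).trans
      (Nat.mul_le_mul_right _ (Finset.card_le_card Finset.sdiff_subset))
    obtain ⟨hAb, hAM⟩ := Finset.mem_sdiff.1 hA
    have hA := mem_abelianSubgroups.1 hAb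
    exact card_tuplesIn_le_of_card_ne_mG r hA fun h => hAM (mem_maxAbelianSubgroups.2 ⟨hA, h⟩)
  calc Nat.card (CommTuple r G) = ((abelianSubgroups G).biUnion (tuplesIn r)).card :=
        card_commTuple_eq_card_biUnion r
    _ ≤ ∑ A ∈ abelianSubgroups G, (tuplesIn r A).card := Finset.card_biUnion_le
    _ = ∑ A ∈ abelianSubgroups G \ maxAbelianSubgroups G, (tuplesIn r A).card
          + ∑ A ∈ maxAbelianSubgroups G, (tuplesIn r A).card :=
        (Finset.sum_sdiff maxAbelianSubgroups_subset).symm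
    _ ≤ Nmax G * mG G ^ r + (abelianSubgroups G).card * bG G ^ r := by
        rw [sum_card_tuplesIn_maxAbelianSubgroups, add_comm]
        exact Nat.add_le_add_left h_rest _

theorem card_tuplesIn_inter_le_of_ne [DecidableEq G] (r : ℕ) {A B : Subgroup G}
    (hA : A ∈ maxAbelianSubgroups G) (hB : B ∈ maxAbelianSubgroups G) (hAB : A ≠ B) :
    (tuplesIn r A ∩ tuplesIn r B).card ≤ bG G ^ r := by
  obtain ⟨hA, hAm⟩ := mem_maxAbelianSubgroups.1 hA
  obtain ⟨-, hBm⟩ := mem_maxAbelianSubgroups.1 hB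
  rw [← tuplesIn_inf]
  refine card_tuplesIn_le_of_card_ne_mG r (hA.inf_left B) (ne_of_lt ?_)
  exact hAm ▸ Subgroup.card_inf_lt_of_ne hAB (hBm.trans hAm.symm)

theorem Nmax_mul_le (r : ℕ) :
    Nmax G * mG G ^ r ≤ Nat.card (CommTuple r G) + Nmax G ^ 2 * bG G ^ r := by
  classical
  set M := maxAbelianSubgroups G
  have h_pairs : ∑ A ∈ M, ∑ B ∈ M.erase A, (tuplesIn r A ∩ tuplesIn r B).card
      ≤ Nmax G ^ 2 * bG G ^ r := by
    calc _ ≤ ∑ _A ∈ M, Nmax G * bG G ^ r := by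
          refine Finset.sum_le_sum fun A hA => ?_
          refine (Finset.sum_le_card_nsmul _ _ (bG G ^ r) fun B hB => ?_).trans ?_
          · exact card_tuplesIn_inter_le_of_ne r hA (Finset.mem_of_mem_erase hB)
              (Finset.ne_of_mem_erase hB).symm
          · rw [smul_eq_mul, ← card_maxAbelianSubgroups]
            exact Nat.mul_le_mul_right _ (Finset.card_erase_le)
      _ = Nmax G ^ 2 * bG G ^ r := by
          rw [Finset.sum_const, card_maxAbelianSubgroups, smul_eq_mul]
          ring
  calc Nmax G * mG G ^ r = ∑ A ∈ M, (tuplesIn r A).card :=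
        (sum_card_tuplesIn_maxAbelianSubgroups r).symm
    _ ≤ (M.biUnion (tuplesIn r)).card
          + ∑ A ∈ M, ∑ B ∈ M.erase A, (tuplesIn r A ∩ tuplesIn r B).card :=
        Finset.sum_card_le_card_biUnion_add_sum_card_inter M (tuplesIn r)
    _ ≤ ((abelianSubgroups G).biUnion (tuplesIn r)).card + Nmax G ^ 2 * bG G ^ r :=
        add_le_add (Finset.card_le_card
          (Finset.biUnion_subset_biUnion_of_subset_left _ maxAbelianSubgroups_subset)) h_pairs
    _ = Nat.card (CommTuple r G) + Nmax G ^ 2 * bG G ^ r := by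
        rw [card_commTuple_eq_card_biUnion]

end

theorem stmt9_general (G : Type*) [Group G] [Fintype G] :
    ∃ C : ℝ, ∀ r : ℕ, 1 ≤ r →
      |(Nat.card (CommTuple r G) : ℝ) - (Nmax G : ℝ) * (mG G : ℝ) ^ r| ≤
        C * (bG G : ℝ) ^ r := by
  refine ⟨Nmax G ^ 2 + (abelianSubgroups G).card, fun r _ => ?_⟩
  have h_upper : (Nat.card (CommTuple r G) : ℝ)
      ≤ Nmax G * mG G ^ r + (abelianSubgroups G).card * bG G ^ r := by
    exact_mod_cast card_commTuple_le r
  have h_lower : (Nmax G * mG G ^ r : ℝ) ≤ Nat.card (CommTuple r G) + Nmax G ^ 2 * bG G ^ r := by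
    exact_mod_cast Nmax_mul_le r
  have hb : (0 : ℝ) ≤ bG G ^ r := by positivity
  have hN : (0 : ℝ) ≤ Nmax G ^ 2 * bG G ^ r := by positivity
  have hK : (0 : ℝ) ≤ (abelianSubgroups G).card * bG G ^ r := by positivity
  rw [abs_sub_le_iff]
  constructor <;> linarith

theorem stmt9 (G : Type*) [Group G] [Fintype G] (hna : ∃ a b : G, a * b ≠ b * a) :
    ∃ C : ℝ, ∀ r : ℕ, 1 ≤ r →
      |(Nat.card (CommTuple r G) : ℝ) - (Nmax G : ℝ) * (mG G : ℝ) ^ r| ≤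
        C * (bG G : ℝ) ^ r :=
  stmt9_general G
end

section
/- Let G = A ⋊ K be a finite semidirect product with A abelian. Then the maximum order m(G) of an abelian subgroup of G equals max over abelian subgroups B ≤ K of |C_A(B)| · |B|, where C_A(B) is the subgroup of elements of A fixed by the conjugation action of every element of B. -/
section Aux

variable {A K : Type*} [CommGroup A] [Group K] (φ : K →* MulAut A)

/-- commuting actions for elements of an abelian subgroup -/
lemma aux_comm {B : Subgroup K} (hB : IsAbelianSubgroup B) {b k : K}
    (hb : b ∈ B) (hk : k ∈ B) (a : A) : φ b (φ k a) = φ k (φ b a) := by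
  have h : b * k = k * b := by
    have := hB ⟨b, hb⟩ ⟨k, hk⟩
    exact Subtype.ext_iff.mp this
  have : φ (b * k) a = φ (k * b) a := by rw [h]
  simpa [map_mul, MulAut.mul_apply] using this

/-- The abelian subgroup `C_A(B) ⋊ B` of the semidirect product. -/
def bigSub (B : Subgroup K) (hB : IsAbelianSubgroup B) : Subgroup (A ⋊[φ] K) where
  carrier := {g | g.right ∈ B ∧ ∀ b ∈ B, φ b g.left = g.left}
  one_mem' := ⟨B.one_mem, by simp⟩
  mul_mem' := by
    rintro x y ⟨hxB, hxF⟩ ⟨hyB, hyF⟩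
    refine ⟨?_, ?_⟩
    · simpa [SemidirectProduct.mul_right] using B.mul_mem hxB hyB
    · intro b hb
      rw [SemidirectProduct.mul_left, map_mul, hxF b hb,
        aux_comm φ hB hb hxB, hyF b hb]
  inv_mem' := by
    rintro x ⟨hxB, hxF⟩
    refine ⟨by simpa using B.inv_mem hxB, ?_⟩
    intro b hb
    rw [SemidirectProduct.inv_left]
    rw [aux_comm φ hB hb (B.inv_mem hxB)]
    exact congrArg _ ((map_inv (φ b) x.left).trans (by rw [hxF b hb]))

lemma bigSub_abelian (B : Subgroup K) (hB : IsAbelianSubgroup B) :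
    IsAbelianSubgroup (bigSub φ B hB) := by
  rintro ⟨x, hxB, hxF⟩ ⟨y, hyB, hyF⟩
  refine Subtype.ext (SemidirectProduct.ext ?_ ?_)
  · show (x * y).left = (y * x).left
    rw [SemidirectProduct.mul_left, SemidirectProduct.mul_left,
      hxF _ hyB, hyF _ hxB, mul_comm]
  · show (x * y).right = (y * x).right
    rw [SemidirectProduct.mul_right, SemidirectProduct.mul_right]
    exact Subtype.ext_iff.mp (hB ⟨x.right, hxB⟩ ⟨y.right, hyB⟩)

/-- `bigSub` is equivalent to `C_A(B) × B`. -/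
noncomputable def bigSubEquiv (B : Subgroup K) (hB : IsAbelianSubgroup B) :
    bigSub φ B hB ≃ {a : A // ∀ b ∈ B, φ b a = a} × B where
  toFun g := (⟨g.1.left, g.2.2⟩, ⟨g.1.right, g.2.1⟩)
  invFun p := ⟨⟨p.1.1, p.2.1⟩, p.2.2, fun b hb => p.1.2 b hb⟩
  left_inv g := rfl
  right_inv p := rfl

end Aux

theorem stmt11 (A K : Type*) [CommGroup A] [Group K] [Fintype A] [Fintype K]
    (φ : K →* MulAut A) :
    mG (A ⋊[φ] K) =
      sSup {n : ℕ | ∃ B : Subgroup K, IsAbelianSubgroup B ∧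
        n = Nat.card {a : A // ∀ b ∈ B, φ b a = a} * Nat.card B} := by
  haveI : Finite (A ⋊[φ] K) := by
    apply Finite.of_injective (fun g => (g.left, g.right))
    intro a b h
    exact SemidirectProduct.ext (congrArg Prod.fst h) (congrArg Prod.snd h)
  set S1 := {n : ℕ | ∃ M : Subgroup (A ⋊[φ] K), IsAbelianSubgroup M ∧ Nat.card M = n}
  set S2 := {n : ℕ | ∃ B : Subgroup K, IsAbelianSubgroup B ∧
      n = Nat.card {a : A // ∀ b ∈ B, φ b a = a} * Nat.card B}
  have hS1ne : S1.Nonempty :=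
    ⟨Nat.card (⊥ : Subgroup (A ⋊[φ] K)), ⊥, fun x y => Subsingleton.elim _ _, rfl⟩
  have hS2ne : S2.Nonempty :=
    ⟨_, (⊥ : Subgroup K), fun x y => Subsingleton.elim _ _, rfl⟩
  have hS1bdd : BddAbove S1 := by
    refine ⟨Nat.card (A ⋊[φ] K), ?_⟩
    rintro n ⟨M, _, rfl⟩
    exact Nat.card_le_card_of_injective _ Subtype.val_injective
  have hS2bdd : BddAbove S2 := by
    refine ⟨Nat.card A * Nat.card K, ?_⟩
    rintro n ⟨B, _, rfl⟩
    exact Nat.mul_le_mul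
      (Nat.card_le_card_of_injective _ (Subtype.val_injective))
      (Nat.card_le_card_of_injective _ (Subtype.val_injective))
  show sSup S1 = sSup S2
  apply le_antisymm
  · apply csSup_le hS1ne
    rintro n ⟨M, hM, rfl⟩
    -- project to K
    set f : M →* K := SemidirectProduct.rightHom.comp M.subtype with hf
    have hrange : f.range = M.map SemidirectProduct.rightHom := by
      rw [hf, MonoidHom.range_comp, Subgroup.range_subtype]
    set B := M.map (SemidirectProduct.rightHom : A ⋊[φ] K →* K) with hBdef
    have hBab : IsAbelianSubgroup B := by
      rintro ⟨x, hx⟩ ⟨y, hy⟩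
      obtain ⟨gx, hgx, rfl⟩ := hx
      obtain ⟨gy, hgy, rfl⟩ := hy
      refine Subtype.ext ?_
      simp only [MulMemClass.coe_mul]
      rw [← map_mul, ← map_mul]
      congr 1
      exact Subtype.ext_iff.mp (hM ⟨gx, hgx⟩ ⟨gy, hgy⟩)
    -- kernel injects into fixed points
    have hker : Nat.card f.ker ≤ Nat.card {a : A // ∀ b ∈ B, φ b a = a} := by
      apply Nat.card_le_card_of_injective
        (f := fun m : f.ker => (⟨(m.1.1).left, ?_⟩ : {a : A // ∀ b ∈ B, φ b a = a}))
      · intro m₁ m₂ h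
        have h1 : (m₁.1.1).left = (m₂.1.1).left := congrArg Subtype.val h
        have hr1 : (m₁.1.1).right = 1 := m₁.2
        have hr2 : (m₂.1.1).right = 1 := m₂.2
        exact Subtype.ext (Subtype.ext (SemidirectProduct.ext h1 (hr1.trans hr2.symm)))
      · rintro b ⟨g, hg, rfl⟩
        have hcomm := congrArg Subtype.val (hM m.1 ⟨g, hg⟩)
        simp only [MulMemClass.coe_mul] at hcomm
        have hl := congrArg SemidirectProduct.left hcomm
        have hr : (m.1.1).right = 1 := m.2
        rw [SemidirectProduct.mul_left, SemidirectProduct.mul_left, hr] at hl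
        simp only [map_one, MulAut.one_apply] at hl
        -- hl : m.left * g.left = g.left * φ g.right m.left
        have h2 : g.left * (m.1.1).left = g.left * φ (g.right) (m.1.1).left := by
          rw [← hl, mul_comm]
        show φ (g.right) (m.1.1).left = (m.1.1).left
        exact (mul_left_cancel h2).symm
    have hcard : Nat.card M = Nat.card B * Nat.card f.ker := by
      rw [Subgroup.card_eq_card_quotient_mul_card_subgroup f.ker]
      congr 1
      rw [Nat.card_congr (QuotientGroup.quotientKerEquivRange f).toEquiv, hrange]
    have hmem : Nat.card {a : A // ∀ b ∈ B, φ b a = a} * Nat.card B ∈ S2 :=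
      ⟨B, hBab, rfl⟩
    calc Nat.card M = Nat.card B * Nat.card f.ker := hcard
      _ ≤ Nat.card B * Nat.card {a : A // ∀ b ∈ B, φ b a = a} :=
          Nat.mul_le_mul_left _ hker
      _ = Nat.card {a : A // ∀ b ∈ B, φ b a = a} * Nat.card B := mul_comm _ _
      _ ≤ sSup S2 := le_csSup hS2bdd hmem
  · apply csSup_le hS2ne
    rintro n ⟨B, hB, rfl⟩
    have : Nat.card {a : A // ∀ b ∈ B, φ b a = a} * Nat.card B
        = Nat.card (bigSub φ B hB) := by
      rw [Nat.card_congr (bigSubEquiv φ B hB), Nat.card_prod]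
    rw [this]
    exact le_csSup hS1bdd ⟨bigSub φ B hB, bigSub_abelian φ B hB, rfl⟩
end

section
/- Let N be a normal subgroup of a finite group G. Then for every r ≥ 1, P_r(G/N) ≥ P_r(G). -/
instance (r : ℕ) (G : Type*) [Group G] [Finite G] : Finite (CommTuple r G) :=
  Subtype.finite

lemma commTuple_card_le (r : ℕ) (G : Type*) [Group G] [Finite G] (N : Subgroup G) [N.Normal] :
    Nat.card (CommTuple r G) ≤ Nat.card (CommTuple r (G ⧸ N)) * Nat.card N ^ r := by
  classical
  let f : CommTuple r G → CommTuple r (G ⧸ N) × (Fin r → N) :=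
    fun x => ⟨⟨fun i => QuotientGroup.mk (x.1 i),
        fun i j => (x.2 i j).map (QuotientGroup.mk' N)⟩,
      fun i => ⟨((QuotientGroup.mk (x.1 i) : G ⧸ N)).out⁻¹ * x.1 i, by
        rw [← QuotientGroup.eq]
        simp⟩⟩
  have hf : Function.Injective f := by
    intro x y h
    obtain ⟨h1, h2⟩ := Prod.mk.injEq .. ▸ h
    apply Subtype.ext
    funext i
    have e1 : (QuotientGroup.mk (x.1 i) : G ⧸ N) = QuotientGroup.mk (y.1 i) :=
      congrFun (congrArg Subtype.val h1) i
    have e2 : ((QuotientGroup.mk (x.1 i) : G ⧸ N)).out⁻¹ * x.1 i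
        = ((QuotientGroup.mk (y.1 i) : G ⧸ N)).out⁻¹ * y.1 i :=
      congrArg Subtype.val (congrFun h2 i)
    rw [e1] at e2
    exact mul_left_cancel e2
  calc Nat.card (CommTuple r G) ≤ Nat.card (CommTuple r (G ⧸ N) × (Fin r → N)) :=
        Nat.card_le_card_of_injective f hf
    _ = Nat.card (CommTuple r (G ⧸ N)) * Nat.card N ^ r := by
        rw [Nat.card_prod, Nat.card_fun, Nat.card_eq_fintype_card (α := Fin r), Fintype.card_fin]

theorem stmt12 (G : Type*) [Group G] [Fintype G] (N : Subgroup G) [N.Normal]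
    (r : ℕ) (hr : 1 ≤ r) :
    P r G ≤ P r (G ⧸ N) := by
  have hcard : Nat.card G = Nat.card (G ⧸ N) * Nat.card N :=
    Subgroup.card_eq_card_quotient_mul_card_subgroup N
  have hQ : (0:ℝ) < (Nat.card (G ⧸ N) : ℝ) := by
    exact_mod_cast Nat.card_pos
  have hN : (0:ℝ) < (Nat.card N : ℝ) := by
    exact_mod_cast Nat.card_pos
  have hle : (Nat.card (CommTuple r G) : ℝ)
      ≤ (Nat.card (CommTuple r (G ⧸ N)) : ℝ) * (Nat.card N : ℝ) ^ r := by
    exact_mod_cast commTuple_card_le r G N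
  unfold P
  rw [hcard]
  push_cast
  rw [mul_pow, div_le_div_iff₀ (by positivity) (by positivity)]
  calc (Nat.card (CommTuple r G) : ℝ) * (Nat.card (G ⧸ N) : ℝ) ^ r
      ≤ ((Nat.card (CommTuple r (G ⧸ N)) : ℝ) * (Nat.card N : ℝ) ^ r) * (Nat.card (G ⧸ N) : ℝ) ^ r :=
        mul_le_mul_of_nonneg_right hle (by positivity)
    _ = (Nat.card (CommTuple r (G ⧸ N)) : ℝ) * ((Nat.card (G ⧸ N) : ℝ) ^ r * (Nat.card N : ℝ) ^ r) := by
        ring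
end

section
/- If G and H are isoclinic finite groups, then P_r(G) = P_r(H) for all r ≥ 2. -/
open scoped commutatorElement

/-- Isoclinism of groups, à la P. Hall. -/
structure Isoclinic (G H : Type*) [Group G] [Group H] where
  φ : G ⧸ Subgroup.center G ≃* H ⧸ Subgroup.center H
  ψ : commutator G ≃* commutator H
  compat : ∀ (g₁ g₂ : G) (h₁ h₂ : H),
    φ (QuotientGroup.mk g₁) = QuotientGroup.mk h₁ →
    φ (QuotientGroup.mk g₂) = QuotientGroup.mk h₂ →
    (ψ ⟨⁅g₁, g₂⁆,
        Subgroup.commutator_mem_commutator (Subgroup.mem_top _) (Subgroup.mem_top _)⟩ : H)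
      = ⁅h₁, h₂⁆

open Subgroup

section CentralCosets

variable {G : Type*} [Group G]

theorem Commute.mul_mem_center {a b z w : G} (h : Commute a b) (hz : z ∈ center G)
    (hw : w ∈ center G) : Commute (a * z) (b * w) := by
  have hz' : ∀ g, Commute g z := mem_center_iff.mp hz
  have hw' : ∀ g, Commute g w := mem_center_iff.mp hw
  exact (h.mul_right (hw' a)).mul_left ((hz' b).symm.mul_right (hw' z))

theorem commute_of_mk_eq {a a' b b' : G} (ha : (a : G ⧸ center G) = a')
    (hb : (b : G ⧸ center G) = b') (h : Commute a b) : Commute a' b' := by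
  have key := h.mul_mem_center (QuotientGroup.eq.mp ha) (QuotientGroup.eq.mp hb)
  rwa [mul_inv_cancel_left, mul_inv_cancel_left] at key

theorem commute_iff_of_mk_eq {a a' b b' : G} (ha : (a : G ⧸ center G) = a')
    (hb : (b : G ⧸ center G) = b') : Commute a b ↔ Commute a' b' :=
  ⟨commute_of_mk_eq ha hb, commute_of_mk_eq ha.symm hb.symm⟩

end CentralCosets

def CommCosetTuple (r : ℕ) (G : Type*) [Group G] : Type _ :=
  {x : Fin r → G ⧸ center G // ∀ i j, Commute (x i).out (x j).out}

noncomputable def commTupleEquiv (r : ℕ) (G : Type*) [Group G] :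
    CommTuple r G ≃ CommCosetTuple r G × (Fin r → center G) :=
  let splitCoset : (Fin r → G) ≃ (Fin r → G ⧸ center G) × (Fin r → center G) :=
    (Equiv.piCongrRight fun _ => groupEquivQuotientProdSubgroup).trans
      (Equiv.arrowProdEquivProdArrow _ _ _)
  (splitCoset.subtypeEquiv fun _ => forall₂_congr fun _ _ =>
      commute_iff_of_mk_eq (QuotientGroup.out_eq' _).symm (QuotientGroup.out_eq' _).symm).trans
    (Equiv.prodSubtypeFstEquivSubtypeProd
      (p := fun x : Fin r → G ⧸ center G => ∀ i j, Commute (x i).out (x j).out))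

theorem card_commTuple (r : ℕ) (G : Type*) [Group G] :
    Nat.card (CommTuple r G) = Nat.card (CommCosetTuple r G) * Nat.card (center G) ^ r := by
  rw [Nat.card_congr (commTupleEquiv r G), Nat.card_prod, Nat.card_fun, Nat.card_fin]

theorem P_eq_card_commCosetTuple_div (r : ℕ) (G : Type*) [Group G] [Finite G] :
    P r G = Nat.card (CommCosetTuple r G) / (Nat.card (G ⧸ center G) : ℝ) ^ r := by
  have hZ : (Nat.card (center G) : ℝ) ≠ 0 := Nat.cast_ne_zero.mpr Nat.card_pos.ne'
  rw [P, card_commTuple, card_eq_card_quotient_mul_card_subgroup (center G)]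
  push_cast
  rw [mul_pow, mul_div_mul_right _ _ (pow_ne_zero r hZ)]

namespace Isoclinic

variable {G H : Type*} [Group G] [Group H] (e : Isoclinic G H)

theorem commute_out_iff (x y : G ⧸ center G) :
    Commute x.out y.out ↔ Commute (e.φ x).out (e.φ y).out := by
  have h := e.compat x.out y.out (e.φ x).out (e.φ y).out
    (by rw [QuotientGroup.out_eq', QuotientGroup.out_eq'])
    (by rw [QuotientGroup.out_eq', QuotientGroup.out_eq'])
  rw [← commutatorElement_eq_one_iff_commute, ← commutatorElement_eq_one_iff_commute, ← h,
    OneMemClass.coe_eq_one, EmbeddingLike.map_eq_one_iff, ← OneMemClass.coe_eq_one]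

noncomputable def commCosetTupleEquiv (r : ℕ) : CommCosetTuple r G ≃ CommCosetTuple r H :=
  (Equiv.piCongrRight fun _ => e.φ.toEquiv).subtypeEquiv fun x =>
    forall₂_congr fun i j => e.commute_out_iff (x i) (x j)

end Isoclinic

theorem stmt13_general (G H : Type*) [Group G] [Group H] [Fintype G] [Fintype H]
    (h : Nonempty (Isoclinic G H)) (r : ℕ) :
    P r G = P r H := by
  obtain ⟨e⟩ := h
  rw [P_eq_card_commCosetTuple_div, P_eq_card_commCosetTuple_div,
    Nat.card_congr (e.commCosetTupleEquiv r), Nat.card_congr e.φ.toEquiv]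

theorem stmt13 (G H : Type*) [Group G] [Group H] [Fintype G] [Fintype H]
    (h : Nonempty (Isoclinic G H)) (r : ℕ) (hr : 2 ≤ r) :
    P r G = P r H :=
  stmt13_general G H h r
end

section
/- Let G = A ⋊ K with A and K finite abelian, (|A|,|K|) = 1, and suppose the action of K on A is fixed-point-free, i.e., C_A(b) = 1 for every nontrivial b ∈ K. Then for every r ≥ 1, the number of r-tuples of pairwise commuting elements of G equals |A|^r + |A|·(|K|^r − 1). -/
/-- The endomorphism `c ↦ c * (φ b c)⁻¹` of a commutative group. -/
def theta17 {A K : Type*} [CommGroup A] [Group K] (φ : K →* MulAut A) (b : K) : A →* A where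
  toFun c := c * (φ b c)⁻¹
  map_one' := by simp
  map_mul' x y := by
    simp [map_mul, mul_inv, mul_comm, mul_left_comm, mul_assoc]

lemma commute_conj17 {G : Type*} [Group G] {a b : G} (h : Commute a b) (g : G) :
    Commute (g⁻¹ * a * g) (g⁻¹ * b * g) := by
  unfold Commute SemiconjBy
  have h1 : (g⁻¹ * a * g) * (g⁻¹ * b * g) = g⁻¹ * (a * b) * g := by group
  have h2 : (g⁻¹ * b * g) * (g⁻¹ * a * g) = g⁻¹ * (b * a) * g := by group
  rw [h1, h2, h.eq]

theorem stmt17 (A K : Type*) [CommGroup A] [CommGroup K] [Fintype A] [Fintype K]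
    (φ : K →* MulAut A) (hco : Nat.Coprime (Nat.card A) (Nat.card K))
    (hfree : ∀ b : K, b ≠ 1 → ∀ a : A, φ b a = a → a = 1)
    (r : ℕ) (hr : 1 ≤ r) :
    Nat.card (CommTuple r (A ⋊[φ] K)) =
      Nat.card A ^ r + Nat.card A * (Nat.card K ^ r - 1) := by
  classical
  have conj_eq : ∀ (c : A) (b : K),
      (⟨c,1⟩ : A ⋊[φ] K) * ⟨1,b⟩ * ⟨c,1⟩⁻¹ = ⟨theta17 φ b c, b⟩ := by
    intro c b; ext <;> simp [theta17, mul_comm]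
  have hbij : ∀ b : K, b ≠ 1 → Function.Bijective (theta17 φ b) := by
    intro b hb
    rw [Finite.injective_iff_bijective.symm]
    intro x y hxy
    simp only [theta17, MonoidHom.coe_mk, OneHom.coe_mk, ← div_eq_mul_inv] at hxy
    rw [div_eq_div_iff_mul_eq_mul] at hxy
    have : φ b (x * y⁻¹) = x * y⁻¹ := by
      rw [map_mul, map_inv, ← div_eq_mul_inv, ← div_eq_mul_inv,
        div_eq_div_iff_mul_eq_mul, hxy, mul_comm]
    have h1 : x * y⁻¹ = 1 := hfree b hb _ this
    rwa [mul_inv_eq_one] at h1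
  set Φ : ((Fin r → A) ⊕ (A × {y : Fin r → K // y ≠ 1})) → CommTuple r (A ⋊[φ] K) :=
    fun z => match z with
    | .inl a => ⟨fun i => ⟨a i, 1⟩, by
        intro i j
        show _ = _
        ext <;> simp [mul_comm]⟩
    | .inr (c, y) => ⟨fun i => ⟨c,1⟩⁻¹ * ⟨1, y.1 i⟩ * ⟨c,1⟩, by
        intro i j
        have : Commute (⟨1, y.1 i⟩ : A ⋊[φ] K) ⟨1, y.1 j⟩ := by
          show _ = _; ext <;> simp [mul_comm]
        exact commute_conj17 this _⟩ with hΦ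
  have conj_eq' : ∀ (c : A) (b : K),
      (⟨c,1⟩ : A ⋊[φ] K)⁻¹ * ⟨1,b⟩ * ⟨c,1⟩ = ⟨theta17 φ b c⁻¹, b⟩ := by
    intro c b
    have := conj_eq c⁻¹ b
    simpa using this
  have Φl : ∀ a i, (Φ (.inl a)).1 i = (⟨a i, 1⟩ : A ⋊[φ] K) := fun a i => rfl
  have Φr : ∀ c y i, (Φ (.inr (c,y))).1 i = (⟨theta17 φ (y.1 i) c⁻¹, y.1 i⟩ : A ⋊[φ] K) :=
    fun c y i => conj_eq' c (y.1 i)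
  have hbijΦ : Function.Bijective Φ := by
    constructor
    · rintro (a | ⟨c, y⟩) (a' | ⟨c', y'⟩) h
      · congr 1
        funext i
        have h1 := congrFun (congrArg Subtype.val h) i
        rw [Φl, Φl] at h1
        exact congrArg SemidirectProduct.left h1
      · exfalso
        apply y'.2
        funext i
        have h1 := congrFun (congrArg Subtype.val h) i
        rw [Φl, Φr] at h1
        exact (congrArg SemidirectProduct.right h1).symm
      · exfalso
        apply y.2
        funext i
        have h1 := congrFun (congrArg Subtype.val h) i
        rw [Φr, Φl] at h1
        exact congrArg SemidirectProduct.right h1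
      · have hy : y.1 = y'.1 := by
          funext i
          have h1 := congrFun (congrArg Subtype.val h) i
          rw [Φr, Φr] at h1
          exact congrArg SemidirectProduct.right h1
        obtain ⟨i0, hi0⟩ : ∃ i, y.1 i ≠ 1 := by
          by_contra hcon; push_neg at hcon; exact y.2 (funext hcon)
        have h1 := congrFun (congrArg Subtype.val h) i0
        rw [Φr, Φr] at h1
        have hl := congrArg SemidirectProduct.left h1
        simp only at hl
        rw [hy] at hl
        have hcc : c⁻¹ = c'⁻¹ := (hbij (y'.1 i0) (hy ▸ hi0)).1 hl
        have hcc' : c = c' := by rwa [inv_inj] at hcc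
        simp only [Sum.inr.injEq, Prod.mk.injEq]
        exact ⟨hcc', Subtype.ext hy⟩
    · rintro ⟨x, hx⟩
      by_cases hall : ∀ i, (x i).right = 1
      · refine ⟨.inl fun i => (x i).left, ?_⟩
        apply Subtype.ext
        funext i
        rw [Φl]
        ext
        · rfl
        · exact (hall i).symm
      · push_neg at hall
        obtain ⟨i0, hi0⟩ := hall
        obtain ⟨c, hc⟩ := (hbij _ hi0).2 ((x i0).left)
        have hx0' : (⟨c,1⟩ : A ⋊[φ] K) * ⟨1, (x i0).right⟩ * ⟨c,1⟩⁻¹ = x i0 := by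
          rw [conj_eq]
          ext
          · exact hc
          · rfl
        have hx0 : (⟨c,1⟩ : A ⋊[φ] K)⁻¹ * x i0 * ⟨c,1⟩ = ⟨1, (x i0).right⟩ := by
          rw [← hx0']
          simp [mul_assoc]
        have key : ∀ j, x j = ⟨c,1⟩ * ⟨1, (x j).right⟩ * ⟨c,1⟩⁻¹ := by
          intro j
          have hcomm := commute_conj17 (hx i0 j) (⟨c,1⟩ : A ⋊[φ] K)
          rw [hx0] at hcomm
          set g := (⟨c,1⟩ : A ⋊[φ] K)⁻¹ * x j * ⟨c,1⟩ with hg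
          have hgr : g.right = (x j).right := by simp [hg]
          have hgl : g.left = 1 := by
            have h1 := congrArg SemidirectProduct.left hcomm.eq
            simp only [SemidirectProduct.mul_left] at h1
            simp only [one_mul, map_one, mul_one] at h1
            exact hfree _ hi0 _ h1
          have hgeq : g = ⟨1, (x j).right⟩ := by
            ext
            · exact hgl
            · exact hgr
          rw [hg] at hgeq
          rw [← hgeq]
          simp [mul_assoc]
        refine ⟨.inr (c⁻¹, ⟨fun i => (x i).right, ?_⟩), ?_⟩
        · intro h1
          exact hi0 (congrFun h1 i0)
        · apply Subtype.ext
          funext j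
          rw [Φr]
          simp only
          rw [key j, conj_eq]
          simp
  rw [← Nat.card_eq_of_bijective Φ hbijΦ]
  have hsub : Fintype.card {y : Fin r → K // y ≠ 1} = Fintype.card K ^ r - 1 := by
    have h2 := Fintype.card_subtype_compl (fun y : Fin r → K => y = 1)
    simp [Fintype.card_subtype_eq, Fintype.card_fun] at h2
    simpa [Fintype.card_fun] using h2
  simp only [Nat.card_eq_fintype_card, Fintype.card_sum, Fintype.card_prod, Fintype.card_fun,
    Fintype.card_fin, hsub]
end
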